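/- In the presented group G₄ = ⟨R₁, R₂, R₃ | R₁R₂R₁ = R₂R₁R₂, R₂R₃R₂ = R₃R₂R₃, R₁R₃ = R₃R₁, R₁² = R₂R₁²R₂⟩, one has (R₁R₂R₃)⁴ = R₁² R₃⁻², and consequently the elements R₁²R₃⁻² and R₁²R₃² are central elements of G₄ distinct from R₁⁴. -/

import Mathlib

/-- The relators of the presentation
`⟨R₁, R₂, R₃ | R₁R₂R₁ = R₂R₁R₂, R₂R₃R₂ = R₃R₂R₃, R₁R₃ = R₃R₁, R₁² = R₂R₁²R₂⟩`,
as elements of the free group on three generators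
`R₁ = FreeGroup.of 0`, `R₂ = FreeGroup.of 1`, `R₃ = FreeGroup.of 2`. -/
def spinOct4Rels : Set (FreeGroup (Fin 3)) :=
  { (FreeGroup.of 0 * FreeGroup.of 1 * FreeGroup.of 0) *
      (FreeGroup.of 1 * FreeGroup.of 0 * FreeGroup.of 1)⁻¹,
    (FreeGroup.of 1 * FreeGroup.of 2 * FreeGroup.of 1) *
      (FreeGroup.of 2 * FreeGroup.of 1 * FreeGroup.of 2)⁻¹,
    (FreeGroup.of 0 * FreeGroup.of 2) * (FreeGroup.of 2 * FreeGroup.of 0)⁻¹,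
    (FreeGroup.of 0) ^ 2 * (FreeGroup.of 1 * (FreeGroup.of 0) ^ 2 * FreeGroup.of 1)⁻¹ }


/-!
Conjugation by `R₁R₂R₁` swaps `R₁` and `R₂`, and conjugation by `Δ = R₁R₂R₃` sends
`R₁ ↦ R₂ ↦ R₃`. Transporting the defining relation "`R₁²` inverts `R₂`" along these automorphisms
shows that `R₂²` inverts `R₁` and `R₃` and that `R₃²` inverts `R₂`. Since `R₁²` and `R₂²` invert
each other, they generate a quotient of `Q₈`, so `R₂⁸ = 1`. Writing `Δ² = R₂R₁R₂²R₃R₂` and pushing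
the three copies of `R₂²` in `Δ⁴` to the right gives `Δ⁴ = R₁²R₃⁻²R₂⁸ = R₁²R₃⁻²`.

`R₁²R₃^{±2}` commutes with `R₁` and `R₃`, and with `R₂` because both factors invert it. Finally,
the 4-cycles `(0 1 2 3)`, `(1 4 3 5)`, `(4 6 5 7)` of `S₈` satisfy the relations while `R₃^{±2}`
and `R₁²` go to different permutations.
-/

section SemiconjBy

variable {G : Type*} [Group G]

theorem SemiconjBy.transport {g a x y a' x' y' : G} (h : SemiconjBy a x y)
    (ha : SemiconjBy g a a') (hx : SemiconjBy g x x') (hy : SemiconjBy g y y') :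
    SemiconjBy a' x' y' := by
  have conj_eq {p q : G} (hpq : SemiconjBy g p q) : MulAut.conj g p = q := by
    rw [MulAut.conj_apply, hpq.eq, mul_inv_cancel_right]
  simpa only [conj_eq ha, conj_eq hx, conj_eq hy] using h.map (MulAut.conj g)

theorem SemiconjBy.braid_left {a b : G} (h : a * b * a = b * a * b) :
    SemiconjBy (a * b * a) a b := by
  rw [SemiconjBy]
  nth_rewrite 1 [h]
  group

theorem SemiconjBy.braid_right {a b : G} (h : a * b * a = b * a * b) :
    SemiconjBy (a * b * a) b a := by
  rw [SemiconjBy]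
  nth_rewrite 2 [h]
  group

theorem SemiconjBy.swap_sq_of_braid {a b : G} (hab : a * b * a = b * a * b)
    (h : SemiconjBy (a ^ 2) b b⁻¹) : SemiconjBy (b ^ 2) a a⁻¹ :=
  h.transport ((SemiconjBy.braid_left hab).pow_right 2) (SemiconjBy.braid_right hab)
    (SemiconjBy.braid_right hab).inv_right

theorem pow_four_eq_one_of_semiconjBy_inv {x y : G} (hxy : SemiconjBy x y y⁻¹)
    (hyx : SemiconjBy y x x⁻¹) : x ^ 4 = 1 := by
  have hsq : x ^ 2 = y ^ 2 := by
    have h : x * y * x = y⁻¹ * x ^ 2 := by rw [hxy.eq, mul_assoc, sq]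
    rw [mul_assoc, hyx.eq, mul_inv_cancel_left, eq_inv_mul_iff_mul_eq] at h
    rw [← h, sq]
  have h := hxy.pow_right 2
  rw [inv_pow, ← hsq] at h
  calc x ^ 4 = x ^ 2 * (x * x ^ 2) * x⁻¹ := by group
    _ = x ^ 2 * ((x ^ 2)⁻¹ * x) * x⁻¹ := by rw [h.eq]
    _ = 1 := by group

theorem SemiconjBy.commute_mul_of_inv {p q y : G} (hp : SemiconjBy p y y⁻¹)
    (hq : SemiconjBy q y y⁻¹) : Commute (p * q) y :=
  SemiconjBy.mul_left (by simpa using hp.inv_right) hq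

end SemiconjBy

theorem PresentedGroup.mem_center_iff {α : Type*} {rels : Set (FreeGroup α)}
    {z : PresentedGroup rels} :
    z ∈ Subgroup.center (PresentedGroup rels) ↔ ∀ i, Commute (of i) z := by
  rw [← Subgroup.centralizer_univ, ← Subgroup.coe_top, ← PresentedGroup.closure_range_of,
    Subgroup.centralizer_closure, Subgroup.mem_centralizer_iff, Set.forall_mem_range]
  rfl

namespace SpinOct4

local notation "G₄" => PresentedGroup spinOct4Rels
local notation "R₁" => PresentedGroup.of (rels := spinOct4Rels) (0 : Fin 3)
local notation "R₂" => PresentedGroup.of (rels := spinOct4Rels) (1 : Fin 3)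
local notation "R₃" => PresentedGroup.of (rels := spinOct4Rels) (2 : Fin 3)

theorem braid₁₂ : R₁ * R₂ * R₁ = R₂ * R₁ * R₂ := by
  exact PresentedGroup.mk_eq_mk_of_mul_inv_mem (rels := spinOct4Rels)
    (x := .of 0 * .of 1 * .of 0) (y := .of 1 * .of 0 * .of 1) (by simp [spinOct4Rels])

theorem braid₂₃ : R₂ * R₃ * R₂ = R₃ * R₂ * R₃ := by
  exact PresentedGroup.mk_eq_mk_of_mul_inv_mem (rels := spinOct4Rels)
    (x := .of 1 * .of 2 * .of 1) (y := .of 2 * .of 1 * .of 2) (by simp [spinOct4Rels])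

theorem commute₁₃ : Commute R₁ R₃ := by
  exact PresentedGroup.mk_eq_mk_of_mul_inv_mem (rels := spinOct4Rels)
    (x := .of 0 * .of 2) (y := .of 2 * .of 0) (by simp [spinOct4Rels])

theorem sq_R₁_inverts_R₂ : SemiconjBy (R₁ ^ 2) R₂ R₂⁻¹ := by
  have h : R₁ ^ 2 = R₂ * R₁ ^ 2 * R₂ := by
    exact PresentedGroup.mk_eq_mk_of_mul_inv_mem (rels := spinOct4Rels)
      (x := .of 0 ^ 2) (y := .of 1 * .of 0 ^ 2 * .of 1) (by simp [spinOct4Rels])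
  rw [SemiconjBy, eq_inv_mul_iff_mul_eq, ← mul_assoc, ← h]

theorem sq_R₂_inverts_R₁ : SemiconjBy (R₂ ^ 2) R₁ R₁⁻¹ :=
  sq_R₁_inverts_R₂.swap_sq_of_braid braid₁₂

theorem semiconjBy_R₁₂₃_R₁ : SemiconjBy (R₁ * R₂ * R₃) R₁ R₂ := by
  calc R₁ * R₂ * R₃ * R₁ = R₁ * R₂ * R₁ * R₃ := by
        rw [mul_assoc _ R₃, ← commute₁₃.eq]; group
    _ = R₂ * (R₁ * R₂ * R₃) := by rw [braid₁₂]; group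

theorem semiconjBy_R₁₂₃_R₂ : SemiconjBy (R₁ * R₂ * R₃) R₂ R₃ := by
  calc R₁ * R₂ * R₃ * R₂ = R₁ * (R₃ * R₂ * R₃) := by rw [← braid₂₃]; group
    _ = R₃ * (R₁ * R₂ * R₃) := by rw [← mul_assoc, ← mul_assoc, commute₁₃.eq]; group

theorem sq_R₃_inverts_R₂ : SemiconjBy (R₃ ^ 2) R₂ R₂⁻¹ :=
  sq_R₂_inverts_R₁.transport (semiconjBy_R₁₂₃_R₂.pow_right 2) semiconjBy_R₁₂₃_R₁
    semiconjBy_R₁₂₃_R₁.inv_right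

theorem sq_R₂_inverts_R₃ : SemiconjBy (R₂ ^ 2) R₃ R₃⁻¹ :=
  sq_R₃_inverts_R₂.swap_sq_of_braid braid₂₃.symm

theorem inv_sq_R₃_inverts_R₂ : SemiconjBy (R₃ ^ 2)⁻¹ R₂ R₂⁻¹ := by
  simpa using sq_R₃_inverts_R₂.inv_symm_left.inv_right

theorem pow_eight_R₂ : R₂ ^ 8 = 1 := by
  have h := pow_four_eq_one_of_semiconjBy_inv (x := R₂ ^ 2) (y := R₁ ^ 2)
    (by simpa only [inv_pow] using sq_R₂_inverts_R₁.pow_right 2)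
    (by simpa only [inv_pow] using sq_R₁_inverts_R₂.pow_right 2)
  rwa [← pow_mul] at h

theorem commute_sq_R₁_mul_R₂ {q : G₄} (hq : SemiconjBy q R₂ R₂⁻¹) :
    Commute (R₁ ^ 2 * q) R₂ :=
  sq_R₁_inverts_R₂.commute_mul_of_inv hq

theorem R₁₂₃_sq : (R₁ * R₂ * R₃) ^ 2 = R₂ * R₁ * R₂ ^ 2 * R₃ * R₂ := by
  calc (R₁ * R₂ * R₃) ^ 2 = R₁ * R₂ * (R₃ * R₁) * R₂ * R₃ := by rw [sq]; group
    _ = (R₁ * R₂ * R₁) * (R₃ * R₂ * R₃) := by rw [← commute₁₃.eq]; group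
    _ = R₂ * R₁ * R₂ ^ 2 * R₃ * R₂ := by rw [braid₁₂, ← braid₂₃, sq]; group

-- `group` fails to identify `x * x` with `x ^ 2`, hence the explicit expansions of powers.
theorem R₁₂₃_pow_four : (R₁ * R₂ * R₃) ^ 4 = R₁ ^ 2 * (R₃ ^ 2)⁻¹ := by
  have h₁ : SemiconjBy (R₂ ^ 2) R₁⁻¹ R₁ := by simpa using sq_R₂_inverts_R₁.inv_right
  have h₃ : SemiconjBy (R₂ ^ 2) R₃⁻¹ R₃ := by simpa using sq_R₂_inverts_R₃.inv_right
  calc (R₁ * R₂ * R₃) ^ 4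
      = R₂ * R₁ * (R₂ ^ 2 * R₃) * (R₂ ^ 2 * R₁) * (R₂ ^ 2 * R₃) * R₂ := by
        rw [show 4 = 2 * 2 from rfl, pow_mul, R₁₂₃_sq]; simp only [sq]; group
    _ = R₂ * R₁ * R₃⁻¹ * (R₂ ^ 2 * R₁⁻¹) * (R₂ ^ 2 * R₃⁻¹) * R₂ ^ 3 := by
        rw [sq_R₂_inverts_R₃.eq, sq_R₂_inverts_R₁.eq]
        simp only [pow_succ, pow_zero, one_mul]; group
    _ = R₂ * (R₁ * R₃⁻¹ * R₁) * (R₂ ^ 2 * R₃) * R₂ ^ 5 := by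
        rw [h₁.eq, h₃.eq]; simp only [pow_succ, pow_zero, one_mul]; group
    _ = R₂ * (R₁ * (R₃⁻¹ * R₁) * R₃⁻¹) * R₂ ^ 7 := by
        rw [sq_R₂_inverts_R₃.eq]; simp only [pow_succ, pow_zero, one_mul]; group
    _ = R₂ * (R₁ ^ 2 * (R₃ ^ 2)⁻¹) * R₂ ^ 7 := by
        rw [← commute₁₃.inv_right.eq]; simp only [sq]; group
    _ = R₁ ^ 2 * (R₃ ^ 2)⁻¹ * R₂ ^ 8 := by
        rw [← (commute_sq_R₁_mul_R₂ inv_sq_R₃_inverts_R₂).eq, mul_assoc, ← pow_succ']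
    _ = R₁ ^ 2 * (R₃ ^ 2)⁻¹ := by rw [pow_eight_R₂, mul_one]

theorem sq_R₁_mul_mem_center {q : G₄} (h₁ : Commute R₁ q) (h₂ : SemiconjBy q R₂ R₂⁻¹)
    (h₃ : Commute R₃ q) : R₁ ^ 2 * q ∈ Subgroup.center G₄ := by
  rw [PresentedGroup.mem_center_iff]
  intro i
  fin_cases i
  · exact ((Commute.refl R₁).pow_right 2).mul_right h₁
  · exact (commute_sq_R₁_mul_R₂ h₂).symm
  · exact (commute₁₃.symm.pow_right 2).mul_right h₃

def permOf : Fin 3 → Equiv.Perm (Fin 8) :=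
  ![List.formPerm [0, 1, 2, 3], List.formPerm [1, 4, 3, 5], List.formPerm [4, 6, 5, 7]]

theorem permOf_rels : ∀ r ∈ spinOct4Rels, FreeGroup.lift permOf r = 1 := by
  intro r hr
  simp only [spinOct4Rels, Set.mem_insert_iff, Set.mem_singleton_iff] at hr
  rcases hr with rfl | rfl | rfl | rfl <;>
    · rw [map_mul, map_inv, mul_inv_eq_one]
      simp only [map_mul, map_pow, FreeGroup.lift_apply_of]
      decide

noncomputable def permRep : G₄ →* Equiv.Perm (Fin 8) := PresentedGroup.toGroup permOf_rels

theorem sq_R₃_ne_sq_R₁ : R₃ ^ 2 ≠ R₁ ^ 2 :=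
  ne_of_apply_ne permRep (by simp only [permRep, map_pow, PresentedGroup.toGroup.of]; decide)

theorem inv_sq_R₃_ne_sq_R₁ : (R₃ ^ 2)⁻¹ ≠ R₁ ^ 2 :=
  ne_of_apply_ne permRep <| by
    simp only [permRep, map_inv, map_pow, PresentedGroup.toGroup.of]; decide

end SpinOct4

open SpinOct4 in
theorem stmt_15 :
    (PresentedGroup.of (rels := spinOct4Rels) 0 * PresentedGroup.of 1 *
        PresentedGroup.of 2) ^ 4 =
      (PresentedGroup.of (rels := spinOct4Rels) 0) ^ 2 * (PresentedGroup.of 2) ^ (-2 : ℤ) ∧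
    (PresentedGroup.of (rels := spinOct4Rels) 0) ^ 2 * (PresentedGroup.of 2) ^ (-2 : ℤ) ∈
      Subgroup.center (PresentedGroup spinOct4Rels) ∧
    (PresentedGroup.of (rels := spinOct4Rels) 0) ^ 2 * (PresentedGroup.of 2) ^ 2 ∈
      Subgroup.center (PresentedGroup spinOct4Rels) ∧
    (PresentedGroup.of (rels := spinOct4Rels) 0) ^ 2 * (PresentedGroup.of 2) ^ (-2 : ℤ) ≠
      (PresentedGroup.of (rels := spinOct4Rels) 0) ^ 4 ∧
    (PresentedGroup.of (rels := spinOct4Rels) 0) ^ 2 * (PresentedGroup.of 2) ^ 2 ≠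
      (PresentedGroup.of (rels := spinOct4Rels) 0) ^ 4 := by
  have hzpow : PresentedGroup.of (rels := spinOct4Rels) 2 ^ (-2 : ℤ) =
      (PresentedGroup.of 2 ^ 2)⁻¹ := by
    rw [zpow_neg, zpow_ofNat]
  have hpow : PresentedGroup.of (rels := spinOct4Rels) 0 ^ 4 =
      PresentedGroup.of 0 ^ 2 * PresentedGroup.of 0 ^ 2 := by
    rw [← pow_add]
  rw [hzpow, hpow, Ne, Ne, mul_right_inj, mul_right_inj]
  exact ⟨R₁₂₃_pow_four,
    sq_R₁_mul_mem_center (commute₁₃.pow_right 2).inv_right inv_sq_R₃_inverts_R₂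
      ((Commute.refl _).pow_right 2).inv_right,
    sq_R₁_mul_mem_center (commute₁₃.pow_right 2) sq_R₃_inverts_R₂
      ((Commute.refl _).pow_right 2),
    inv_sq_R₃_ne_sq_R₁, sq_R₃_ne_sq_R₁⟩
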